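/- arXiv:math/0702747 — 3 statements merged into one kernel-verified Lean document; each statement's English description precedes it below -/
import Mathlib

section
/- Let μ and ν be Borel probability measures on the unit sphere S^d (d ≥ 1) that vanish on all (d-1)-rectifiable sets. Then there exists a coupling γ of μ and ν (a probability measure on S^d × S^d with marginals μ and ν) and ε > 0 such that |x - y| ≥ ε for all (x,y) in the support of γ. -/
open MeasureTheory Metric Finset
open scoped ENNReal NNReal



open scoped Classical in
set_option maxHeartbeats 1000000 in
/-- Gale's feasibility theorem for the transportation problem (real-valued Hall theorem). -/
theorem gale_feasible {ι κ : Type*} (E : ι → κ → Prop) :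
    ∀ (n : ℕ) (I : Finset ι) (J : Finset κ) (a : ι → ℝ) (b : κ → ℝ),
      I.card + J.card ≤ n →
      (∀ i ∈ I, 0 ≤ a i) → (∀ j ∈ J, 0 ≤ b j) →
      ∑ i ∈ I, a i = ∑ j ∈ J, b j →
      (∀ S ⊆ I, ∑ i ∈ S, a i ≤ ∑ j ∈ J.filter (fun j => ∃ i ∈ S, E i j), b j) →
      ∃ x : ι → κ → ℝ, (∀ i j, 0 ≤ x i j) ∧
        (∀ i j, x i j ≠ 0 → i ∈ I ∧ j ∈ J ∧ E i j) ∧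
        (∀ i ∈ I, ∑ j ∈ J, x i j = a i) ∧
        (∀ j ∈ J, ∑ i ∈ I, x i j = b j) := by
  classical
  intro n
  induction n with
  | zero =>
    intro I J a b hcard _ _ _ _
    have hI : I = ∅ := card_eq_zero.1 (by omega)
    have hJ : J = ∅ := card_eq_zero.1 (by omega)
    subst hI; subst hJ
    exact ⟨fun _ _ => 0, fun _ _ => le_rfl, fun i j h => absurd rfl h,
      fun i hi => absurd hi (notMem_empty i), fun j hj => absurd hj (notMem_empty j)⟩
  | succ n IH =>
    intro I J a b hcard ha hb htot hHall
    by_cases hzi : ∃ i ∈ I, a i = 0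
    · -- remove a zero row
      obtain ⟨i, hiI, hai⟩ := hzi
      have hIc : 1 ≤ I.card := card_pos.2 ⟨i, hiI⟩
      have hcard' : (I.erase i).card + J.card ≤ n := by
        rw [card_erase_of_mem hiI]; omega
      obtain ⟨x, hx0, hxsupp, hxrow, hxcol⟩ := IH (I.erase i) J a b hcard'
        (fun i' hi' => ha i' (mem_of_mem_erase hi')) hb
        (by rw [Finset.sum_erase _ hai, htot])
        (fun S hS => hHall S (hS.trans (erase_subset i I)))
      have hxi : ∀ j, x i j = 0 := by
        intro j; by_contra h
        exact (notMem_erase i I) (hxsupp i j h).1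
      refine ⟨x, hx0, ?_, ?_, ?_⟩
      · intro i' j h
        obtain ⟨h1, h2, h3⟩ := hxsupp i' j h
        exact ⟨mem_of_mem_erase h1, h2, h3⟩
      · intro i' hi'
        by_cases hii : i' = i
        · subst hii
          rw [Finset.sum_eq_zero (fun j _ => hxi j), hai]
        · exact hxrow i' (mem_erase.2 ⟨hii, hi'⟩)
      · intro j hj
        rw [← hxcol j hj]
        exact (Finset.sum_erase (f := fun i' => x i' j) I (hxi j)).symm
    · by_cases hzj : ∃ j ∈ J, b j = 0
      · -- remove a zero column
        obtain ⟨j, hjJ, hbj⟩ := hzj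
        have hJc : 1 ≤ J.card := card_pos.2 ⟨j, hjJ⟩
        have hcard' : I.card + (J.erase j).card ≤ n := by
          rw [card_erase_of_mem hjJ]; omega
        obtain ⟨x, hx0, hxsupp, hxrow, hxcol⟩ := IH I (J.erase j) a b hcard'
          ha (fun j' hj' => hb j' (mem_of_mem_erase hj'))
          (by rw [htot, Finset.sum_erase _ hbj])
          (by
            intro S hS
            rw [filter_erase, Finset.sum_erase _ hbj]
            exact hHall S hS)
        have hxj : ∀ i, x i j = 0 := by
          intro i; by_contra h
          exact (notMem_erase j J) (hxsupp i j h).2.1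
        refine ⟨x, hx0, ?_, ?_, ?_⟩
        · intro i' j' h
          obtain ⟨h1, h2, h3⟩ := hxsupp i' j' h
          exact ⟨h1, mem_of_mem_erase h2, h3⟩
        · intro i' hi'
          rw [← hxrow i' hi']
          exact (Finset.sum_erase _ (hxj i')).symm
        · intro j' hj'
          by_cases hjj : j' = j
          · subst hjj
            rw [Finset.sum_eq_zero (fun i _ => hxj i), hbj]
          · exact hxcol j' (mem_erase.2 ⟨hjj, hj'⟩)
      · -- all entries positive
        push_neg at hzi hzj
        by_cases hIemp : I = ∅
        · subst hIemp
          have hb0 : ∀ j ∈ J, b j = 0 :=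
            (Finset.sum_eq_zero_iff_of_nonneg hb).1 (by rw [← htot, Finset.sum_empty])
          exact ⟨fun _ _ => 0, fun _ _ => le_rfl, fun i j h => absurd rfl h,
            fun i hi => absurd hi (notMem_empty i),
            fun j hj => by rw [Finset.sum_empty, hb0 j hj]⟩
        · obtain ⟨i, hiI⟩ := nonempty_of_ne_empty hIemp
          have hIc : 1 ≤ I.card := card_pos.2 ⟨i, hiI⟩
          have hai : 0 < a i := lt_of_le_of_ne (ha i hiI) (Ne.symm (hzi i hiI))
          have h1 := hHall {i} (singleton_subset_iff.2 hiI)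
          rw [Finset.sum_singleton] at h1
          obtain ⟨j, hjf, _⟩ := Finset.exists_ne_zero_of_sum_ne_zero
            (ne_of_gt (lt_of_lt_of_le hai h1))
          have hjJ : j ∈ J := (mem_filter.1 hjf).1
          have hEij : E i j := by
            obtain ⟨i', hi', hE⟩ := (mem_filter.1 hjf).2
            rwa [mem_singleton.1 hi'] at hE
          have hbj : 0 < b j := lt_of_le_of_ne (hb j hjJ) (Ne.symm (hzj j hjJ))
          -- the minimum quantity to push along (i, j)
          obtain ⟨c, hcF, hcmin⟩ :
              ∃ c, c ∈ insert (a i) (insert (b j)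
                  ((((I.erase i).powerset.filter
                    (fun S => j ∈ J.filter (fun j' => ∃ i' ∈ S, E i' j'))).image (fun S => (∑ j' ∈ J.filter (fun j'' => ∃ i'' ∈ S, E i'' j''), b j') - ∑ i' ∈ S, a i')))) ∧
                ∀ y ∈ insert (a i) (insert (b j)
                  ((((I.erase i).powerset.filter
                    (fun S => j ∈ J.filter (fun j' => ∃ i' ∈ S, E i' j'))).image (fun S => (∑ j' ∈ J.filter (fun j'' => ∃ i'' ∈ S, E i'' j''), b j') - ∑ i' ∈ S, a i')))), c ≤ y :=
            ⟨_, Finset.min'_mem _ (insert_nonempty _ _),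
              fun y hy => Finset.min'_le _ y hy⟩
          have hSSprop : ∀ S ∈ (I.erase i).powerset.filter (fun S => j ∈ J.filter (fun j' => ∃ i' ∈ S, E i' j')),
              S ⊆ I ∧ i ∉ S ∧ j ∈ J.filter (fun j' => ∃ i' ∈ S, E i' j') := by
            intro S hS
            obtain ⟨hS1, hS2⟩ := mem_filter.1 hS
            obtain ⟨hsub, hnot⟩ := (Finset.subset_erase).1 (mem_powerset.1 hS1)
            exact ⟨hsub, hnot, hS2⟩
          have hc_nonneg : 0 ≤ c := by
            rcases mem_insert.1 hcF with h | h
            · rw [h]; exact ha i hiI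
            · rcases mem_insert.1 h with h | h
              · rw [h]; exact hb j hjJ
              · obtain ⟨S, hS, hSy⟩ := mem_image.1 h
                have hSy' : (∑ j' ∈ J.filter (fun j' => ∃ i' ∈ S, E i' j'), b j') - (∑ i' ∈ S, a i') = c := hSy
                have := hHall S (hSSprop S hS).1
                linarith
          have hc_le_ai : c ≤ a i := hcmin _ (mem_insert_self _ _)
          have hc_le_bj : c ≤ b j := hcmin _ (mem_insert.2 (Or.inr (mem_insert_self _ _)))
          have hc_le_slack : ∀ S ∈ (I.erase i).powerset.filter (fun S => j ∈ J.filter (fun j' => ∃ i' ∈ S, E i' j')),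
              c ≤ (∑ j' ∈ J.filter (fun j' => ∃ i' ∈ S, E i' j'), b j') - (∑ i' ∈ S, a i') := by
            intro S hS
            exact hcmin _ (mem_insert.2 (Or.inr (mem_insert.2 (Or.inr
              (mem_image_of_mem _ hS)))))
          set a' : ι → ℝ := Function.update a i (a i - c) with ha'def
          set b' : κ → ℝ := Function.update b j (b j - c) with hb'def
          have hsuma' : ∀ S : Finset ι,
              ∑ i' ∈ S, a' i' = (∑ i' ∈ S, a i') - (if i ∈ S then c else 0) := by
            intro S
            by_cases hiS : i ∈ S
            · rw [ha'def, Finset.sum_update_of_mem hiS, if_pos hiS,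
                Finset.sdiff_singleton_eq_erase, ← Finset.add_sum_erase S a hiS]
              ring
            · rw [ha'def, Finset.sum_update_of_notMem hiS, if_neg hiS, sub_zero]
          have hsumb' : ∀ T : Finset κ,
              ∑ j' ∈ T, b' j' = (∑ j' ∈ T, b j') - (if j ∈ T then c else 0) := by
            intro T
            by_cases hjT : j ∈ T
            · rw [hb'def, Finset.sum_update_of_mem hjT, if_pos hjT,
                Finset.sdiff_singleton_eq_erase, ← Finset.add_sum_erase T b hjT]
              ring
            · rw [hb'def, Finset.sum_update_of_notMem hjT, if_neg hjT, sub_zero]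
          have ha'0 : ∀ i' ∈ I, 0 ≤ a' i' := by
            intro i' hi'
            by_cases hii : i' = i
            · subst hii; rw [ha'def, Function.update_self]; linarith
            · rw [ha'def, Function.update_of_ne hii]; exact ha i' hi'
          have hb'0 : ∀ j' ∈ J, 0 ≤ b' j' := by
            intro j' hj'
            by_cases hjj : j' = j
            · subst hjj; rw [hb'def, Function.update_self]; linarith
            · rw [hb'def, Function.update_of_ne hjj]; exact hb j' hj'
          have ha'eq : ∀ i', i' ≠ i → a' i' = a i' := fun i' h =>
            Function.update_of_ne h _ _
          have hb'eq : ∀ j', j' ≠ j → b' j' = b j' := fun j' h =>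
            Function.update_of_ne h _ _
          have hHall' : ∀ S ⊆ I, ∑ i' ∈ S, a' i' ≤ ∑ j' ∈ J.filter (fun j' => ∃ i' ∈ S, E i' j'), b' j' := by
            intro S hS
            have h0 : ∑ i' ∈ S, a i' ≤ ∑ j' ∈ J.filter (fun j' => ∃ i' ∈ S, E i' j'), b j' := hHall S hS
            rw [hsuma' S, hsumb' (J.filter (fun j' => ∃ i' ∈ S, E i' j'))]
            by_cases hiS : i ∈ S
            · have hjN : j ∈ J.filter (fun j' => ∃ i' ∈ S, E i' j') := mem_filter.2 ⟨hjJ, ⟨i, hiS, hEij⟩⟩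
              rw [if_pos hiS, if_pos hjN]
              linarith
            · by_cases hjN : j ∈ J.filter (fun j' => ∃ i' ∈ S, E i' j')
              · have hS' : S ∈ (I.erase i).powerset.filter (fun S => j ∈ J.filter (fun j' => ∃ i' ∈ S, E i' j')) :=
                  mem_filter.2 ⟨mem_powerset.2 ((Finset.subset_erase).2 ⟨hS, hiS⟩), hjN⟩
                have hcs := hc_le_slack S hS'
                rw [if_neg hiS, if_pos hjN]
                linarith
              · rw [if_neg hiS, if_neg hjN]
                linarith
          have htot' : ∑ i' ∈ I, a' i' = ∑ j' ∈ J, b' j' := by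
            have hjJ' : j ∈ J.filter (fun j' => ∃ i' ∈ I, E i' j') := mem_filter.2 ⟨hjJ, ⟨i, hiI, hEij⟩⟩
            rw [hsuma' I, hsumb' J, if_pos hiI, if_pos hjJ, htot]
          -- case analysis on where the minimum is attained
          rcases mem_insert.1 hcF with hca | hrest
          · -- c = a i : remove row i after pushing c along (i,j)
            have ha'i : a' i = 0 := by rw [ha'def, Function.update_self, hca]; ring
            have hcard' : (I.erase i).card + J.card ≤ n := by
              rw [card_erase_of_mem hiI]; omega
            obtain ⟨x', hx'0, hx'supp, hx'row, hx'col⟩ := IH (I.erase i) J a' b' hcard'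
              (fun i' hi' => ha'0 i' (mem_of_mem_erase hi')) hb'0
              (by rw [Finset.sum_erase _ ha'i, htot'])
              (fun S hS => hHall' S (hS.trans (erase_subset i I)))
            have hx'i : ∀ j', x' i j' = 0 := by
              intro j'; by_contra h
              exact (notMem_erase i I) (hx'supp i j' h).1
            refine ⟨fun i' j' => x' i' j' + (if i' = i ∧ j' = j then c else 0), ?_, ?_, ?_, ?_⟩
            · intro i' j'
              dsimp only
              have : (0:ℝ) ≤ (if i' = i ∧ j' = j then c else 0) := by
                split
                · exact hc_nonneg
                · exact le_rfl
              exact add_nonneg (hx'0 i' j') this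
            · intro i' j' h
              dsimp only at h
              by_cases hx' : x' i' j' = 0
              · rw [hx', zero_add] at h
                have hij : i' = i ∧ j' = j := by
                  by_contra hij; rw [if_neg hij] at h; exact h rfl
                rw [hij.1, hij.2]; exact ⟨hiI, hjJ, hEij⟩
              · obtain ⟨h1, h2, h3⟩ := hx'supp i' j' hx'
                exact ⟨mem_of_mem_erase h1, h2, h3⟩
            · intro i' hi'
              dsimp only
              rw [Finset.sum_add_distrib]
              by_cases hii : i' = i
              · subst hii
                rw [Finset.sum_eq_zero (fun j' _ => hx'i j')]
                simp only [eq_self_iff_true, true_and]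
                rw [Finset.sum_ite_eq' J j (fun _ => c), if_pos hjJ, hca]
                ring
              · rw [hx'row i' (mem_erase.2 ⟨hii, hi'⟩), ha'eq i' hii,
                  Finset.sum_eq_zero (fun j' _ => by rw [if_neg (by simp [hii])]), add_zero]
            · intro j' hj'
              dsimp only
              rw [Finset.sum_add_distrib]
              have hcol : ∑ i' ∈ I, x' i' j' = b' j' := by
                rw [← hx'col j' hj']
                exact (Finset.sum_erase (f := fun i'' => x' i'' j') I (hx'i j')).symm
              by_cases hjj : j' = j
              · subst hjj
                rw [hcol]
                simp only [eq_self_iff_true, and_true]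
                rw [Finset.sum_ite_eq' I i (fun _ => c), if_pos hiI,
                  hb'def, Function.update_self]
                ring
              · rw [hcol, hb'eq j' hjj,
                  Finset.sum_eq_zero (fun i' _ => by rw [if_neg (by simp [hjj])]), add_zero]
          · rcases mem_insert.1 hrest with hcb | himg
            · -- c = b j : remove column j after pushing c along (i,j)
              have hb'j : b' j = 0 := by rw [hb'def, Function.update_self, hcb]; ring
              have hJc : 1 ≤ J.card := card_pos.2 ⟨j, hjJ⟩
              have hcard' : I.card + (J.erase j).card ≤ n := by
                rw [card_erase_of_mem hjJ]; omega
              obtain ⟨x', hx'0, hx'supp, hx'row, hx'col⟩ := IH I (J.erase j) a' b' hcard'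
                ha'0 (fun j' hj' => hb'0 j' (mem_of_mem_erase hj'))
                (by rw [htot', Finset.sum_erase _ hb'j])
                (by
                  intro S hS
                  rw [filter_erase, Finset.sum_erase _ hb'j]
                  exact hHall' S hS)
              have hx'j : ∀ i', x' i' j = 0 := by
                intro i'; by_contra h
                exact (notMem_erase j J) (hx'supp i' j h).2.1
              refine ⟨fun i' j' => x' i' j' + (if i' = i ∧ j' = j then c else 0), ?_, ?_, ?_, ?_⟩
              · intro i' j'
                dsimp only
                have : (0:ℝ) ≤ (if i' = i ∧ j' = j then c else 0) := by
                  split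
                  · exact hc_nonneg
                  · exact le_rfl
                exact add_nonneg (hx'0 i' j') this
              · intro i' j' h
                dsimp only at h
                by_cases hx' : x' i' j' = 0
                · rw [hx', zero_add] at h
                  have hij : i' = i ∧ j' = j := by
                    by_contra hij; rw [if_neg hij] at h; exact h rfl
                  rw [hij.1, hij.2]; exact ⟨hiI, hjJ, hEij⟩
                · obtain ⟨h1, h2, h3⟩ := hx'supp i' j' hx'
                  exact ⟨h1, mem_of_mem_erase h2, h3⟩
              · intro i' hi'
                dsimp only
                rw [Finset.sum_add_distrib]
                have hrow : ∑ j' ∈ J, x' i' j' = a' i' := by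
                  rw [← hx'row i' hi']
                  exact (Finset.sum_erase _ (hx'j i')).symm
                by_cases hii : i' = i
                · subst hii
                  rw [hrow]
                  simp only [eq_self_iff_true, true_and]
                  rw [Finset.sum_ite_eq' J j (fun _ => c), if_pos hjJ,
                    ha'def, Function.update_self]
                  ring
                · rw [hrow, ha'eq i' hii,
                    Finset.sum_eq_zero (fun j' _ => by rw [if_neg (by simp [hii])]), add_zero]
              · intro j' hj'
                dsimp only
                rw [Finset.sum_add_distrib]
                by_cases hjj : j' = j
                · subst hjj
                  rw [Finset.sum_eq_zero (fun i' _ => hx'j i')]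
                  simp only [eq_self_iff_true, and_true]
                  rw [Finset.sum_ite_eq' I i (fun _ => c), if_pos hiI, hcb]
                  ring
                · rw [hx'col j' (mem_erase.2 ⟨hjj, hj'⟩), hb'eq j' hjj,
                    Finset.sum_eq_zero (fun i' _ => by rw [if_neg (by simp [hjj])]), add_zero]
            · -- c = slack S₀ for some S₀ : decompose along the tight set
              obtain ⟨S₀, hS₀SS, hcS₀⟩ := mem_image.1 himg
              have hcS₀' : (∑ j' ∈ J.filter (fun j' => ∃ i' ∈ S₀, E i' j'), b j') - (∑ i' ∈ S₀, a i') = c := hcS₀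
              obtain ⟨hS₀I, hiS₀, hjN₀⟩ := hSSprop S₀ hS₀SS
              have hNS₀J : (J.filter (fun j' => ∃ i' ∈ S₀, E i' j')) ⊆ J := filter_subset _ _
              have htight : ∑ i' ∈ S₀, a' i' = ∑ j' ∈ J.filter (fun j' => ∃ i' ∈ S₀, E i' j'), b' j' := by
                rw [hsuma' S₀, hsumb' (J.filter (fun j' => ∃ i' ∈ S₀, E i' j')), if_neg hiS₀, if_pos hjN₀]
                linarith
              -- instance 1 : (S₀, N S₀)
              have hS₀c : S₀.card < I.card :=
                card_lt_card ((Finset.ssubset_iff_of_subset hS₀I).2 ⟨i, hiI, hiS₀⟩)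
              have hcard1 : S₀.card + (J.filter (fun j' => ∃ i' ∈ S₀, E i' j')).card ≤ n := by
                have hN' : (J.filter (fun j' => ∃ i' ∈ S₀, E i' j')).card ≤ J.card := card_le_card hNS₀J
                omega
              have hkey1 : ∀ S ⊆ S₀,
                  (J.filter (fun j' => ∃ i' ∈ S₀, E i' j')).filter (fun j' => ∃ i' ∈ S, E i' j') = J.filter (fun j' => ∃ i' ∈ S, E i' j') := by
                intro S hS
                ext j'
                simp only [mem_filter]
                constructor
                · rintro ⟨⟨h1, _⟩, h3⟩
                  exact ⟨h1, h3⟩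
                · rintro ⟨h1, i', hi', hE⟩
                  exact ⟨⟨h1, i', hS hi', hE⟩, i', hi', hE⟩
              obtain ⟨x₁, hx10, hx1supp, hx1row, hx1col⟩ := IH S₀ (J.filter (fun j' => ∃ i' ∈ S₀, E i' j')) a' b' hcard1
                (fun i' hi' => ha'0 i' (hS₀I hi'))
                (fun j' hj' => hb'0 j' (hNS₀J hj'))
                htight
                (by
                  intro S hS
                  rw [hkey1 S hS]
                  exact hHall' S (hS.trans hS₀I))
              -- instance 2 : (I \ S₀, J \ N S₀)
              have hcard2 : (I \ S₀).card + (J \ (J.filter (fun j' => ∃ i' ∈ S₀, E i' j'))).card ≤ n := by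
                have h1 : (I \ S₀).card ≤ I.card := card_le_card (sdiff_subset)
                have h2 : (J \ (J.filter (fun j' => ∃ i' ∈ S₀, E i' j'))).card < J.card :=
                  card_lt_card (Finset.sdiff_ssubset hNS₀J ⟨j, hjN₀⟩)
                omega
              have htot2 : ∑ i' ∈ I \ S₀, a' i' = ∑ j' ∈ J \ (J.filter (fun j' => ∃ i' ∈ S₀, E i' j')), b' j' := by
                rw [Finset.sum_sdiff_eq_sub hS₀I, Finset.sum_sdiff_eq_sub hNS₀J, htot', htight]
              have hkey2 : ∀ T ⊆ I \ S₀,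
                  (J \ (J.filter (fun j' => ∃ i' ∈ S₀, E i' j'))).filter (fun j' => ∃ i' ∈ T, E i' j')
                    = (J.filter (fun j' => ∃ i' ∈ T, E i' j')) \ (J.filter (fun j' => ∃ i' ∈ S₀, E i' j')) := by
                intro T hT
                ext j'
                simp only [mem_filter, mem_sdiff]
                tauto
              obtain ⟨x₂, hx20, hx2supp, hx2row, hx2col⟩ :=
                IH (I \ S₀) (J \ (J.filter (fun j' => ∃ i' ∈ S₀, E i' j'))) a' b' hcard2
                (fun i' hi' => ha'0 i' (sdiff_subset hi'))
                (fun j' hj' => hb'0 j' (sdiff_subset hj'))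
                htot2
                (by
                  intro T hT
                  rw [hkey2 T hT]
                  obtain ⟨hTI, hTd⟩ := Finset.subset_sdiff.1 hT
                  have hu := hHall' (T ∪ S₀) (union_subset hTI hS₀I)
                  rw [Finset.sum_union hTd] at hu
                  have hNu : (J.filter (fun j' => ∃ i' ∈ (T ∪ S₀), E i' j')) = (J.filter (fun j' => ∃ i' ∈ S₀, E i' j')) ∪ ((J.filter (fun j' => ∃ i' ∈ T, E i' j')) \ (J.filter (fun j' => ∃ i' ∈ S₀, E i' j'))) := by
                    rw [Finset.union_sdiff_self_eq_union]
                    ext j'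
                    simp only [mem_filter, mem_union]
                    constructor
                    · rintro ⟨h1, i', (h | h), hE⟩
                      · exact Or.inr ⟨h1, i', h, hE⟩
                      · exact Or.inl ⟨h1, i', h, hE⟩
                    · rintro (⟨h1, i', h, hE⟩ | ⟨h1, i', h, hE⟩)
                      · exact ⟨h1, i', Or.inr h, hE⟩
                      · exact ⟨h1, i', Or.inl h, hE⟩
                  rw [hNu, Finset.sum_union Finset.disjoint_sdiff] at hu
                  linarith)
              -- combine the two solutions with the pushed mass c at (i,j)
              refine ⟨fun i' j' => x₁ i' j' + x₂ i' j' + (if i' = i ∧ j' = j then c else 0),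
                ?_, ?_, ?_, ?_⟩
              · intro i' j'
                dsimp only
                have : (0:ℝ) ≤ (if i' = i ∧ j' = j then c else 0) := by
                  split
                  · exact hc_nonneg
                  · exact le_rfl
                exact add_nonneg (add_nonneg (hx10 i' j') (hx20 i' j')) this
              · intro i' j' h
                dsimp only at h
                by_cases h1 : x₁ i' j' ≠ 0
                · obtain ⟨ha1, ha2, ha3⟩ := hx1supp i' j' h1
                  exact ⟨hS₀I ha1, hNS₀J ha2, ha3⟩
                · by_cases h2 : x₂ i' j' ≠ 0
                  · obtain ⟨ha1, ha2, ha3⟩ := hx2supp i' j' h2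
                    exact ⟨sdiff_subset ha1, sdiff_subset ha2, ha3⟩
                  · push_neg at h1 h2
                    rw [h1, h2, zero_add, zero_add] at h
                    have hij : i' = i ∧ j' = j := by
                      by_contra hij; rw [if_neg hij] at h; exact h rfl
                    rw [hij.1, hij.2]; exact ⟨hiI, hjJ, hEij⟩
              · intro i' hi'
                dsimp only
                rw [Finset.sum_add_distrib, Finset.sum_add_distrib]
                by_cases hiS : i' ∈ S₀
                · have hii : i' ≠ i := fun h => hiS₀ (h ▸ hiS)
                  have hr1 : ∑ j' ∈ J, x₁ i' j' = a' i' := by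
                    rw [← hx1row i' hiS]
                    exact (Finset.sum_subset hNS₀J (fun j' _ hj' => by
                      by_contra h; exact hj' (hx1supp i' j' h).2.1)).symm
                  have hr2 : ∑ j' ∈ J, x₂ i' j' = 0 :=
                    Finset.sum_eq_zero (fun j' _ => by
                      by_contra h
                      exact (mem_sdiff.1 (hx2supp i' j' h).1).2 hiS)
                  rw [hr1, hr2, ha'eq i' hii,
                    Finset.sum_eq_zero (fun j' _ => by rw [if_neg (by simp [hii])])]
                  ring
                · have hiIS' : i' ∈ I \ S₀ := mem_sdiff.2 ⟨hi', hiS⟩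
                  have hr1 : ∑ j' ∈ J, x₁ i' j' = 0 :=
                    Finset.sum_eq_zero (fun j' _ => by
                      by_contra h
                      exact hiS (hx1supp i' j' h).1)
                  have hr2 : ∑ j' ∈ J, x₂ i' j' = a' i' := by
                    rw [← hx2row i' hiIS']
                    exact (Finset.sum_subset sdiff_subset (fun j' _ hj' => by
                      by_contra h; exact hj' (hx2supp i' j' h).2.1)).symm
                  by_cases hii : i' = i
                  · subst hii
                    rw [hr1, hr2]
                    simp only [eq_self_iff_true, true_and]
                    rw [Finset.sum_ite_eq' J j (fun _ => c), if_pos hjJ,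
                      ha'def, Function.update_self]
                    ring
                  · rw [hr1, hr2, ha'eq i' hii,
                      Finset.sum_eq_zero (fun j' _ => by rw [if_neg (by simp [hii])])]
                    ring
              · intro j' hj'
                dsimp only
                rw [Finset.sum_add_distrib, Finset.sum_add_distrib]
                by_cases hjN : j' ∈ J.filter (fun j' => ∃ i' ∈ S₀, E i' j')
                · have hc1 : ∑ i' ∈ I, x₁ i' j' = b' j' := by
                    rw [← hx1col j' hjN]
                    exact (Finset.sum_subset hS₀I (fun i' _ hi' => by
                      by_contra h; exact hi' (hx1supp i' j' h).1)).symm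
                  have hc2 : ∑ i' ∈ I, x₂ i' j' = 0 :=
                    Finset.sum_eq_zero (fun i' _ => by
                      by_contra h
                      exact (mem_sdiff.1 (hx2supp i' j' h).2.1).2 hjN)
                  by_cases hjj : j' = j
                  · subst hjj
                    rw [hc1, hc2]
                    simp only [eq_self_iff_true, and_true]
                    rw [Finset.sum_ite_eq' I i (fun _ => c), if_pos hiI,
                      hb'def, Function.update_self]
                    ring
                  · rw [hc1, hc2, hb'eq j' hjj,
                      Finset.sum_eq_zero (fun i' _ => by rw [if_neg (by simp [hjj])])]
                    ring
                · have hjj : j' ≠ j := fun h => hjN (h ▸ hjN₀)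
                  have hjJS : j' ∈ J \ (J.filter (fun j' => ∃ i' ∈ S₀, E i' j')) := mem_sdiff.2 ⟨hj', hjN⟩
                  have hc1 : ∑ i' ∈ I, x₁ i' j' = 0 :=
                    Finset.sum_eq_zero (fun i' _ => by
                      by_contra h
                      exact hjN (hx1supp i' j' h).2.1)
                  have hc2 : ∑ i' ∈ I, x₂ i' j' = b' j' := by
                    rw [← hx2col j' hjJS]
                    exact (Finset.sum_subset sdiff_subset (fun i' _ hi' => by
                      by_contra h; exact hi' (hx2supp i' j' h).1)).symm
                  rw [hc1, hc2, hb'eq j' hjj,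
                    Finset.sum_eq_zero (fun i' _ => by rw [if_neg (by simp [hjj])])]
                  ring


open scoped Classical in
/-- The Hall condition follows when each "forbidden" set has small mass. -/
theorem hall_of_small {n : ℕ} (E : Fin n → Fin n → Prop) (a b : Fin n → ℝ)
    (ha : ∀ k, 0 ≤ a k) (hb : ∀ k, 0 ≤ b k)
    (hta : ∑ k, a k = 1) (htb : ∑ k, b k = 1)
    (h1 : ∀ k, ∑ l ∈ Finset.univ.filter (fun l => ¬ E k l), b l ≤ 1/8)
    (h2 : ∀ l, ∑ k ∈ Finset.univ.filter (fun k => ¬ E k l), a k ≤ 1/8) :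
    ∀ S ⊆ Finset.univ,
      ∑ k ∈ S, a k ≤ ∑ l ∈ Finset.univ.filter (fun l => ∃ k ∈ S, E k l), b l := by
  intro S _
  rcases S.eq_empty_or_nonempty with hS | ⟨k₀, hk₀⟩
  · subst hS
    simp only [Finset.sum_empty]
    exact Finset.sum_nonneg (fun l _ => hb l)
  by_cases hbig : ∑ k ∈ S, a k ≤ 7/8
  · have hsub : Finset.univ.filter (fun l => E k₀ l)
        ⊆ Finset.univ.filter (fun l => ∃ k ∈ S, E k l) := by
      intro l hl
      rw [Finset.mem_filter] at hl ⊢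
      exact ⟨hl.1, k₀, hk₀, hl.2⟩
    have hge : (7:ℝ)/8 ≤ ∑ l ∈ Finset.univ.filter (fun l => E k₀ l), b l := by
      have := Finset.sum_filter_add_sum_filter_not Finset.univ (fun l => E k₀ l) b
      have h1' := h1 k₀
      linarith [htb ▸ this]
    calc ∑ k ∈ S, a k ≤ 7/8 := hbig
      _ ≤ ∑ l ∈ Finset.univ.filter (fun l => E k₀ l), b l := hge
      _ ≤ _ := Finset.sum_le_sum_of_subset_of_nonneg hsub (fun l _ _ => hb l)
  · push_neg at hbig
    have hfull : Finset.univ.filter (fun l => ∃ k ∈ S, E k l) = Finset.univ := by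
      apply Finset.eq_univ_of_forall
      intro l
      rw [Finset.mem_filter]
      refine ⟨Finset.mem_univ l, ?_⟩
      by_contra hno
      push_neg at hno
      have hsub : S ⊆ Finset.univ.filter (fun k => ¬ E k l) := by
        intro k hk
        rw [Finset.mem_filter]
        exact ⟨Finset.mem_univ k, hno k hk⟩
      have := Finset.sum_le_sum_of_subset_of_nonneg hsub (fun k _ _ => ha k)
      linarith [h2 l]
    rw [hfull, htb]
    have := Finset.sum_le_sum_of_subset_of_nonneg (Finset.subset_univ S) (fun k _ _ => ha k)
    linarith [hta ▸ this]

/-- Uniformly small closed balls for measures vanishing on singletons, on a compact set. -/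
theorem exists_cap_bound {α : Type*} [MetricSpace α] [MeasurableSpace α]
    [OpensMeasurableSpace α] [ProperSpace α]
    (μ ν : Measure α) [IsFiniteMeasure μ] [IsFiniteMeasure ν] {s : Set α} (hs : IsCompact s)
    (hμ : ∀ x, μ {x} = 0) (hν : ∀ x, ν {x} = 0) :
    ∃ R > 0, ∀ y ∈ s, μ (closedBall y R) ≤ ENNReal.ofReal (1/8) ∧
      ν (closedBall y R) ≤ ENNReal.ofReal (1/8) := by
  have hrx : ∀ x : α, ∃ r > 0, μ (closedBall x r) < ENNReal.ofReal (1/8) ∧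
      ν (closedBall x r) < ENNReal.ofReal (1/8) := by
    intro x
    have h8 : (0:ℝ≥0∞) < ENNReal.ofReal (1/8) := by
      rw [ENNReal.ofReal_pos]; norm_num
    have hμt : Filter.Tendsto (fun r => μ (cthickening r {x})) (nhds 0)
        (nhds 0) := by
      have := tendsto_measure_cthickening_of_isCompact (μ := μ) (isCompact_singleton (x := x))
      rwa [hμ x] at this
    have hνt : Filter.Tendsto (fun r => ν (cthickening r {x})) (nhds 0)
        (nhds 0) := by
      have := tendsto_measure_cthickening_of_isCompact (μ := ν) (isCompact_singleton (x := x))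
      rwa [hν x] at this
    have hev := (hμt.eventually_lt_const h8).and (hνt.eventually_lt_const h8)
    obtain ⟨δ, hδ, hball⟩ := Metric.eventually_nhds_iff.1 hev
    refine ⟨δ/2, by linarith, ?_⟩
    have h2 := hball (y := δ/2) (by
      rw [Real.dist_eq]
      rw [sub_zero, abs_of_pos (by linarith)]
      linarith)
    rwa [cthickening_singleton x (by linarith)] at h2
  choose r hrpos hrμ hrν using
    (fun x => by
      obtain ⟨r, hr1, hr2, hr3⟩ := hrx x
      exact ⟨r, hr1, hr2, hr3⟩ :
      ∀ x : α, ∃ r, r > 0 ∧ μ (closedBall x r) < ENNReal.ofReal (1/8) ∧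
        ν (closedBall x r) < ENNReal.ofReal (1/8))
  obtain ⟨t, hts, hcov⟩ := hs.elim_nhds_subcover (fun x => ball x (r x / 2))
    (fun x _ => ball_mem_nhds x (by linarith [hrpos x]))
  rcases t.eq_empty_or_nonempty with ht | ht
  · refine ⟨1, one_pos, fun y hy => ?_⟩
    exfalso
    have := hcov hy
    subst ht
    simp at this
  · refine ⟨t.inf' ht (fun x => r x / 2), ?_, ?_⟩
    · rw [gt_iff_lt, Finset.lt_inf'_iff]
      intro x _
      linarith [hrpos x]
    · intro y hy
      obtain ⟨x, hxt, hyx⟩ := Set.mem_iUnion₂.1 (hcov hy)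
      have hRx : t.inf' ht (fun x => r x / 2) ≤ r x / 2 := Finset.inf'_le _ hxt
      have hsub : closedBall y (t.inf' ht (fun x => r x / 2)) ⊆ closedBall x (r x) := by
        intro z hz
        rw [mem_closedBall] at hz ⊢
        have h1 : dist y x < r x / 2 := mem_ball.1 hyx
        calc dist z x ≤ dist z y + dist y x := dist_triangle z y x
          _ ≤ r x / 2 + r x / 2 := by linarith
          _ = r x := by ring
      exact ⟨le_of_lt (lt_of_le_of_lt (measure_mono hsub) (hrμ x)),
        le_of_lt (lt_of_le_of_lt (measure_mono hsub) (hrν x))⟩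


/-- A set in `ℝ^{d+1}` is `(d-1)`-rectifiable if it is contained in a countable
union of images of Lipschitz maps from `ℝ^{d-1}` together with a set of
`(d-1)`-dimensional Hausdorff measure zero. -/
def IsRectifiableSet (d : ℕ) (s : Set (EuclideanSpace ℝ (Fin (d + 1)))) : Prop :=
  ∃ (f : ℕ → EuclideanSpace ℝ (Fin (d - 1)) → EuclideanSpace ℝ (Fin (d + 1)))
    (K : ℕ → NNReal) (z : Set (EuclideanSpace ℝ (Fin (d + 1)))),
    (∀ n, LipschitzWith (K n) (f n)) ∧
    μH[(d - 1 : ℕ)] z = 0 ∧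
    s ⊆ (⋃ n, Set.range (f n)) ∪ z

/-- The (closed) support of a measure. -/
def measSupport {α : Type*} [TopologicalSpace α] [MeasurableSpace α]
    (γ : Measure α) : Set α :=
  {x | ∀ U : Set α, IsOpen U → x ∈ U → 0 < γ U}

/-- If `μ` and `ν` are Borel probability measures on the unit sphere `S^d`
(`d ≥ 1`) that vanish on `(d-1)`-rectifiable sets, then there is a coupling `γ`
of `μ` and `ν` and `ε > 0` with `|x - y| ≥ ε` on the support of `γ`. -/
theorem stmt_5 (d : ℕ) (hd : 1 ≤ d)
    (μ ν : Measure (EuclideanSpace ℝ (Fin (d + 1))))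
    [IsProbabilityMeasure μ] [IsProbabilityMeasure ν]
    (hμs : μ (Metric.sphere (0 : EuclideanSpace ℝ (Fin (d + 1))) 1)ᶜ = 0)
    (hνs : ν (Metric.sphere (0 : EuclideanSpace ℝ (Fin (d + 1))) 1)ᶜ = 0)
    (hμ : ∀ s, IsRectifiableSet d s → μ s = 0)
    (hν : ∀ s, IsRectifiableSet d s → ν s = 0) :
    ∃ (γ : Measure (EuclideanSpace ℝ (Fin (d + 1)) × EuclideanSpace ℝ (Fin (d + 1))))
      (ε : ℝ), IsProbabilityMeasure γ ∧
      γ.map Prod.fst = μ ∧ γ.map Prod.snd = ν ∧ 0 < ε ∧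
      ∀ p ∈ measSupport γ, ε ≤ ‖p.1 - p.2‖ := by
  classical
  set α := EuclideanSpace ℝ (Fin (d + 1)) with hα
  -- singletons are rectifiable, hence null
  have hrect : ∀ x : α, IsRectifiableSet d {x} := by
    intro x
    refine ⟨fun _ => fun _ => x, fun _ => 0, ∅, fun n => LipschitzWith.const' x, by simp, ?_⟩
    intro y hy
    left
    exact Set.mem_iUnion.2 ⟨0, ⟨0, hy.symm⟩⟩
  have hμ1 : ∀ x : α, μ {x} = 0 := fun x => hμ _ (hrect x)
  have hν1 : ∀ x : α, ν {x} = 0 := fun x => hν _ (hrect x)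
  -- compactness of the sphere and a uniform cap bound
  have hcomp : IsCompact (sphere (0 : α) 1) := isCompact_sphere 0 1
  have hsphm : MeasurableSet (sphere (0 : α) 1) := Metric.isClosed_sphere.measurableSet
  obtain ⟨R, hR, hcap⟩ := exists_cap_bound μ ν hcomp hμ1 hν1
  -- a finite cover of the sphere by small balls centred on the sphere
  obtain ⟨t, hts, hcov⟩ := hcomp.elim_nhds_subcover (fun y => ball y (R/8))
    (fun y _ => ball_mem_nhds y (by linarith))
  set n := t.card with hn
  set c : Fin n → α := fun k => ((t.equivFin.symm k : { x // x ∈ t }) : α) with hcdef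
  have hcmem : ∀ k, c k ∈ sphere (0 : α) 1 := fun k => hts _ (t.equivFin.symm k).2
  -- the disjointified pieces
  set P : Fin n → Set α := fun k =>
    (sphere (0 : α) 1 ∩ ball (c k) (R/8)) \ (⋃ m, ⋃ (_ : m < k), ball (c m) (R/8)) with hPdef
  have hPm : ∀ k, MeasurableSet (P k) := fun k =>
    ((hsphm.inter measurableSet_ball).diff
      (MeasurableSet.iUnion fun m => MeasurableSet.iUnion fun _ => measurableSet_ball))
  have hPsph : ∀ k, P k ⊆ sphere (0 : α) 1 := fun k x hx => hx.1.1
  have hPball : ∀ k, P k ⊆ ball (c k) (R/8) := fun k x hx => hx.1.2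
  have hPdisj : ∀ (k l : Fin n), k ≠ l → Disjoint (P k) (P l) := by
    have key : ∀ k l : Fin n, k < l → Disjoint (P k) (P l) := by
      intro k l hkl
      rw [Set.disjoint_left]
      intro x hxk hxl
      exact hxl.2 (Set.mem_iUnion.2 ⟨k, Set.mem_iUnion.2 ⟨hkl, hxk.1.2⟩⟩)
    intro k l hkl
    rcases lt_or_gt_of_ne hkl with h | h
    · exact key k l h
    · exact (key l k h).symm
  have hPcov : ∀ x ∈ sphere (0 : α) 1, ∃ k, x ∈ P k := by
    intro x hx
    have hmem : ∃ k : Fin n, x ∈ ball (c k) (R/8) := by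
      obtain ⟨y, hyt, hxy⟩ := Set.mem_iUnion₂.1 (hcov hx)
      refine ⟨t.equivFin ⟨y, hyt⟩, ?_⟩
      have : c (t.equivFin ⟨y, hyt⟩) = y := by
        rw [hcdef]
        simp
      rwa [this]
    set K : Finset (Fin n) := Finset.univ.filter (fun k => x ∈ ball (c k) (R/8)) with hK
    have hKne : K.Nonempty := by
      obtain ⟨k, hk⟩ := hmem
      exact ⟨k, Finset.mem_filter.2 ⟨Finset.mem_univ k, hk⟩⟩
    refine ⟨K.min' hKne, ⟨⟨hx, (Finset.mem_filter.1 (K.min'_mem hKne)).2⟩, ?_⟩⟩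
    intro hmem'
    obtain ⟨m, hm⟩ := Set.mem_iUnion.1 hmem'
    obtain ⟨hmlt, hxm⟩ := Set.mem_iUnion.1 hm
    have : K.min' hKne ≤ m := Finset.min'_le _ _ (Finset.mem_filter.2 ⟨Finset.mem_univ m, hxm⟩)
    exact absurd this (not_le.2 hmlt)
  have hPuni : ⋃ k ∈ Finset.univ, P k = sphere (0 : α) 1 := by
    apply Set.Subset.antisymm
    · intro x hx
      obtain ⟨k, -, hk⟩ := Set.mem_iUnion₂.1 hx
      exact hPsph k hk
    · intro x hx
      obtain ⟨k, hk⟩ := hPcov x hx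
      exact Set.mem_iUnion₂.2 ⟨k, Finset.mem_univ k, hk⟩
  have hPDfin : (↑(Finset.univ : Finset (Fin n)) : Set (Fin n)).PairwiseDisjoint P :=
    fun k _ l _ hkl => hPdisj k l hkl
  -- measures of the sphere
  have hμsph : μ (sphere (0 : α) 1) = 1 := by
    have h := measure_add_measure_compl (μ := μ) hsphm
    rw [hμs, add_zero] at h
    rw [h, measure_univ]
  have hνsph : ν (sphere (0 : α) 1) = 1 := by
    have h := measure_add_measure_compl (μ := ν) hsphm
    rw [hνs, add_zero] at h
    rw [h, measure_univ]
  -- the discrete data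
  set aR : Fin n → ℝ := fun k => (μ (P k)).toReal with haR
  set bR : Fin n → ℝ := fun k => (ν (P k)).toReal with hbR
  have haR0 : ∀ k, 0 ≤ aR k := fun k => ENNReal.toReal_nonneg
  have hbR0 : ∀ k, 0 ≤ bR k := fun k => ENNReal.toReal_nonneg
  have hμsum : ∑ k, μ (P k) = 1 := by
    rw [← measure_biUnion_finset hPDfin (fun k _ => hPm k), hPuni, hμsph]
  have hνsum : ∑ k, ν (P k) = 1 := by
    rw [← measure_biUnion_finset (fun k _ l _ hkl => hPdisj k l hkl) (fun k _ => hPm k),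
      hPuni, hνsph]
  have haRsum : ∑ k, aR k = 1 := by
    rw [haR, ← ENNReal.toReal_sum (fun k _ => measure_ne_top μ _), hμsum, ENNReal.toReal_one]
  have hbRsum : ∑ k, bR k = 1 := by
    rw [hbR, ← ENNReal.toReal_sum (fun k _ => measure_ne_top ν _), hνsum, ENNReal.toReal_one]
  -- the "far" relation
  set E : Fin n → Fin n → Prop := fun k l => R/2 ≤ dist (c k) (c l) with hE
  -- mass bounds for the forbidden sets
  have hbad1 : ∀ k, ∑ l ∈ Finset.univ.filter (fun l => ¬ E k l), bR l ≤ 1/8 := by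
    intro k
    have hsub : (⋃ l ∈ Finset.univ.filter (fun l => ¬ E k l), P l) ⊆ closedBall (c k) R := by
      intro x hx
      obtain ⟨l, hl, hxl⟩ := Set.mem_iUnion₂.1 hx
      have hfar : dist (c k) (c l) < R/2 := not_le.1 (Finset.mem_filter.1 hl).2
      have h1 : dist x (c l) < R/8 := mem_ball.1 (hPball l hxl)
      rw [mem_closedBall]
      calc dist x (c k) ≤ dist x (c l) + dist (c l) (c k) := dist_triangle _ _ _
        _ = dist x (c l) + dist (c k) (c l) := by rw [dist_comm (c l) (c k)]
        _ ≤ R/8 + R/2 := by linarith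
        _ ≤ R := by linarith
    have hle : ν (⋃ l ∈ Finset.univ.filter (fun l => ¬ E k l), P l) ≤ ENNReal.ofReal (1/8) :=
      le_trans (measure_mono hsub) (hcap (c k) (hcmem k)).2
    rw [measure_biUnion_finset (fun k' _ l' _ hkl => hPdisj k' l' hkl)
      (fun l _ => hPm l)] at hle
    have := ENNReal.toReal_le_of_le_ofReal (by norm_num) hle
    rwa [ENNReal.toReal_sum (fun l _ => measure_ne_top ν _)] at this
  have hbad2 : ∀ l, ∑ k ∈ Finset.univ.filter (fun k => ¬ E k l), aR k ≤ 1/8 := by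
    intro l
    have hsub : (⋃ k ∈ Finset.univ.filter (fun k => ¬ E k l), P k) ⊆ closedBall (c l) R := by
      intro x hx
      obtain ⟨k, hk, hxk⟩ := Set.mem_iUnion₂.1 hx
      have hfar : dist (c k) (c l) < R/2 := not_le.1 (Finset.mem_filter.1 hk).2
      have h1 : dist x (c k) < R/8 := mem_ball.1 (hPball k hxk)
      rw [mem_closedBall]
      calc dist x (c l) ≤ dist x (c k) + dist (c k) (c l) := dist_triangle _ _ _
        _ ≤ R/8 + R/2 := by linarith
        _ ≤ R := by linarith
    have hle : μ (⋃ k ∈ Finset.univ.filter (fun k => ¬ E k l), P k) ≤ ENNReal.ofReal (1/8) :=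
      le_trans (measure_mono hsub) (hcap (c l) (hcmem l)).1
    rw [measure_biUnion_finset (fun k' _ l' _ hkl => hPdisj k' l' hkl)
      (fun k _ => hPm k)] at hle
    have := ENNReal.toReal_le_of_le_ofReal (by norm_num) hle
    rwa [ENNReal.toReal_sum (fun k _ => measure_ne_top μ _)] at this
  -- solve the discrete transportation problem
  have hHall := hall_of_small E aR bR haR0 hbR0 haRsum hbRsum hbad1 hbad2
  obtain ⟨x, hx0, hxsupp, hxrow, hxcol⟩ := gale_feasible E
    (Finset.univ.card + Finset.univ.card) Finset.univ Finset.univ aR bR le_rfl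
    (fun k _ => haR0 k) (fun k _ => hbR0 k) (by rw [haRsum, hbRsum]) (fun S hS => by convert hHall S hS)
  -- zero rows/columns
  have hrow0 : ∀ k, μ (P k) = 0 → ∀ l, x k l = 0 := by
    intro k hk l
    have hsum : ∑ l' ∈ Finset.univ, x k l' = 0 := by
      rw [hxrow k (Finset.mem_univ k)]
      simp only [haR]
      rw [hk]
      simp
    exact (Finset.sum_eq_zero_iff_of_nonneg (fun l' _ => hx0 k l')).1 hsum l (Finset.mem_univ l)
  have hcol0 : ∀ l, ν (P l) = 0 → ∀ k, x k l = 0 := by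
    intro l hl k
    have hsum : ∑ k' ∈ Finset.univ, x k' l = 0 := by
      rw [hxcol l (Finset.mem_univ l)]
      simp only [hbR]
      rw [hl]
      simp
    exact (Finset.sum_eq_zero_iff_of_nonneg (fun k' _ => hx0 k' l)).1 hsum k (Finset.mem_univ k)
  -- the normalized piece measures
  set M : Fin n → Measure α := fun k => ((μ (P k))⁻¹.toNNReal) • μ.restrict (P k) with hM
  set N : Fin n → Measure α := fun l => ((ν (P l))⁻¹.toNNReal) • ν.restrict (P l) with hN
  set γ : Measure (α × α) :=
    ∑ k, ∑ l, ((x k l).toNNReal : ℝ≥0) • ((M k).prod (N l)) with hγ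
  -- applications
  have hMap : ∀ k (s : Set α), MeasurableSet s →
      (M k) s = ((μ (P k))⁻¹.toNNReal : ℝ≥0∞) * μ (s ∩ P k) := by
    intro k s hs
    rw [hM]
    simp only [Measure.smul_apply, Measure.restrict_apply hs, smul_eq_mul]
    rfl
  have hNap : ∀ l (s : Set α), MeasurableSet s →
      (N l) s = ((ν (P l))⁻¹.toNNReal : ℝ≥0∞) * ν (s ∩ P l) := by
    intro l s hs
    rw [hN]
    simp only [Measure.smul_apply, Measure.restrict_apply hs, smul_eq_mul]
    rfl
  have hMuniv : ∀ k, μ (P k) ≠ 0 → (M k) Set.univ = 1 := by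
    intro k hk
    rw [hMap k Set.univ MeasurableSet.univ, Set.univ_inter,
      ENNReal.coe_toNNReal (ENNReal.inv_ne_top.2 hk)]
    exact ENNReal.inv_mul_cancel hk (measure_ne_top μ _)
  have hNuniv : ∀ l, ν (P l) ≠ 0 → (N l) Set.univ = 1 := by
    intro l hl
    rw [hNap l Set.univ MeasurableSet.univ, Set.univ_inter,
      ENNReal.coe_toNNReal (ENNReal.inv_ne_top.2 hl)]
    exact ENNReal.inv_mul_cancel hl (measure_ne_top ν _)
  have hγap : ∀ (u : Set (α × α)), γ u
      = ∑ k, ∑ l, ((x k l).toNNReal : ℝ≥0∞) * ((M k).prod (N l)) u := by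
    intro u
    rw [hγ, Measure.finset_sum_apply]
    refine Finset.sum_congr rfl (fun k _ => ?_)
    rw [Measure.finset_sum_apply]
    refine Finset.sum_congr rfl (fun l _ => ?_)
    rw [Measure.smul_apply]
    rfl
  -- first marginal
  have hfst : ∀ (s : Set α), MeasurableSet s → γ (Prod.fst ⁻¹' s) = μ s := by
    intro s hs
    rw [hγap, ← Set.prod_univ]
    have hterm : ∀ k l, ((x k l).toNNReal : ℝ≥0∞) * ((M k).prod (N l)) (s ×ˢ Set.univ)
        = (M k) s * (((x k l).toNNReal : ℝ≥0∞) * (N l) Set.univ) := by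
      intro k l
      rw [Measure.prod_prod]
      ring
    simp_rw [hterm]
    have hinner : ∀ k, ∑ l, (((x k l).toNNReal : ℝ≥0∞) * (N l) Set.univ)
        = ENNReal.ofReal (aR k) := by
      intro k
      have hpt : ∀ l, ((x k l).toNNReal : ℝ≥0∞) * (N l) Set.univ = ENNReal.ofReal (x k l) := by
        intro l
        by_cases hl : ν (P l) = 0
        · rw [hcol0 l hl k]
          simp
        · rw [hNuniv l hl, mul_one]
          rfl
      simp_rw [hpt]
      rw [← ENNReal.ofReal_sum_of_nonneg (fun l _ => hx0 k l), hxrow k (Finset.mem_univ k)]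
    simp_rw [← Finset.mul_sum]
    have hterm2 : ∀ k, (M k) s * ENNReal.ofReal (aR k) = μ (s ∩ P k) := by
      intro k
      have hofr : ENNReal.ofReal (aR k) = μ (P k) := by
        rw [haR]
        exact ENNReal.ofReal_toReal (measure_ne_top μ _)
      rw [hofr, hMap k s hs]
      by_cases hk : μ (P k) = 0
      · rw [hk, mul_zero]
        have : μ (s ∩ P k) = 0 :=
          le_antisymm (le_trans (measure_mono Set.inter_subset_right) hk.le) zero_le
        rw [this]
      · rw [ENNReal.coe_toNNReal (ENNReal.inv_ne_top.2 hk), mul_comm, ← mul_assoc,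
          ENNReal.mul_inv_cancel hk (measure_ne_top μ _), one_mul]
    rw [Finset.sum_congr rfl (fun k _ => by rw [hinner k, hterm2 k])]
    rw [← measure_biUnion_finset
      (fun k _ l _ hkl => ((hPdisj k l hkl).mono Set.inter_subset_right Set.inter_subset_right))
      (fun k _ => hs.inter (hPm k))]
    have : ⋃ k ∈ Finset.univ, s ∩ P k = s ∩ sphere (0 : α) 1 := by
      rw [← Set.inter_iUnion₂, hPuni]
    rw [this]
    have hdiff : μ (s \ sphere (0 : α) 1) = 0 :=
      le_antisymm (le_trans (measure_mono (fun z hz => hz.2)) hμs.le) zero_le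
    have h := measure_inter_add_diff s hsphm (μ := μ)
    rw [hdiff, add_zero] at h
    exact h
  -- second marginal
  have hsnd : ∀ (s : Set α), MeasurableSet s → γ (Prod.snd ⁻¹' s) = ν s := by
    intro s hs
    rw [hγap, ← Set.univ_prod]
    have hterm : ∀ k l, ((x k l).toNNReal : ℝ≥0∞) * ((M k).prod (N l)) (Set.univ ×ˢ s)
        = (N l) s * (((x k l).toNNReal : ℝ≥0∞) * (M k) Set.univ) := by
      intro k l
      rw [Measure.prod_prod]
      ring
    simp_rw [hterm]
    rw [Finset.sum_comm]
    have hinner : ∀ l, ∑ k, (((x k l).toNNReal : ℝ≥0∞) * (M k) Set.univ)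
        = ENNReal.ofReal (bR l) := by
      intro l
      have hpt : ∀ k, ((x k l).toNNReal : ℝ≥0∞) * (M k) Set.univ = ENNReal.ofReal (x k l) := by
        intro k
        by_cases hk : μ (P k) = 0
        · rw [hrow0 k hk l]
          simp
        · rw [hMuniv k hk, mul_one]
          rfl
      simp_rw [hpt]
      rw [← ENNReal.ofReal_sum_of_nonneg (fun k _ => hx0 k l), hxcol l (Finset.mem_univ l)]
    simp_rw [← Finset.mul_sum]
    have hterm2 : ∀ l, (N l) s * ENNReal.ofReal (bR l) = ν (s ∩ P l) := by
      intro l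
      have hofr : ENNReal.ofReal (bR l) = ν (P l) := by
        rw [hbR]
        exact ENNReal.ofReal_toReal (measure_ne_top ν _)
      rw [hofr, hNap l s hs]
      by_cases hl : ν (P l) = 0
      · rw [hl, mul_zero]
        have : ν (s ∩ P l) = 0 :=
          le_antisymm (le_trans (measure_mono Set.inter_subset_right) hl.le) zero_le
        rw [this]
      · rw [ENNReal.coe_toNNReal (ENNReal.inv_ne_top.2 hl), mul_comm, ← mul_assoc,
          ENNReal.mul_inv_cancel hl (measure_ne_top ν _), one_mul]
    rw [Finset.sum_congr rfl (fun l _ => by rw [hinner l, hterm2 l])]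
    rw [← measure_biUnion_finset
      (fun k _ l _ hkl => ((hPdisj k l hkl).mono Set.inter_subset_right Set.inter_subset_right))
      (fun l _ => hs.inter (hPm l))]
    have : ⋃ l ∈ Finset.univ, s ∩ P l = s ∩ sphere (0 : α) 1 := by
      rw [← Set.inter_iUnion₂, hPuni]
    rw [this]
    have hdiff : ν (s \ sphere (0 : α) 1) = 0 :=
      le_antisymm (le_trans (measure_mono (fun z hz => hz.2)) hνs.le) zero_le
    have h := measure_inter_add_diff s hsphm (μ := ν)
    rw [hdiff, add_zero] at h
    exact h
  have hmapfst : γ.map Prod.fst = μ :=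
    Measure.ext (fun s hs => by rw [Measure.map_apply measurable_fst hs, hfst s hs])
  have hmapsnd : γ.map Prod.snd = ν :=
    Measure.ext (fun s hs => by rw [Measure.map_apply measurable_snd hs, hsnd s hs])
  have hprob : IsProbabilityMeasure γ := by
    constructor
    have := hfst Set.univ MeasurableSet.univ
    rw [Set.preimage_univ] at this
    rw [this, measure_univ]
  -- the separation
  have hU : IsOpen {q : α × α | dist q.1 q.2 < R/4} :=
    isOpen_lt (continuous_fst.dist continuous_snd) continuous_const
  have hγU : γ {q : α × α | dist q.1 q.2 < R/4} = 0 := by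
    rw [hγap]
    apply Finset.sum_eq_zero
    intro k _
    apply Finset.sum_eq_zero
    intro l _
    by_cases hx : x k l = 0
    · rw [hx]
      simp
    · have hEkl : E k l := (hxsupp k l hx).2.2
      have hdisU : {q : α × α | dist q.1 q.2 < R/4} ⊆ (P k ×ˢ P l)ᶜ := by
        intro q hq hmem
        obtain ⟨hq1, hq2⟩ := hmem
        have h1 : dist q.1 (c k) < R/8 := mem_ball.1 (hPball k hq1)
        have h2 : dist q.2 (c l) < R/8 := mem_ball.1 (hPball l hq2)
        have h3 : dist (c k) (c l) ≤ dist (c k) q.1 + dist q.1 q.2 + dist q.2 (c l) :=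
          dist_triangle4 _ _ _ _
        rw [dist_comm (c k) q.1] at h3
        have h4 : R/2 ≤ dist (c k) (c l) := hEkl
        have h5 : dist q.1 q.2 < R/4 := hq
        linarith
      have hz : ((M k).prod (N l)) ((P k ×ˢ P l)ᶜ) = 0 := by
        rw [Set.compl_prod_eq_union]
        refine le_antisymm (le_trans (measure_union_le _ _) ?_) zero_le
        have e1 : ((M k).prod (N l)) ((P k)ᶜ ×ˢ Set.univ) = 0 := by
          rw [Measure.prod_prod, hMap k _ (hPm k).compl, Set.compl_inter_self,
            measure_empty, mul_zero, zero_mul]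
        have e2 : ((M k).prod (N l)) (Set.univ ×ˢ (P l)ᶜ) = 0 := by
          rw [Measure.prod_prod, hNap l _ (hPm l).compl, Set.compl_inter_self,
            measure_empty, mul_zero, mul_zero]
        rw [e1, e2, add_zero]
      have : ((M k).prod (N l)) {q : α × α | dist q.1 q.2 < R/4} = 0 :=
        le_antisymm (le_trans (measure_mono hdisU) hz.le) zero_le
      rw [this, mul_zero]
  refine ⟨γ, R/4, hprob, hmapfst, hmapsnd, by linarith, ?_⟩
  intro p hp
  by_contra hlt
  push_neg at hlt
  have hpU : p ∈ {q : α × α | dist q.1 q.2 < R/4} := by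
    rw [Set.mem_setOf_eq, dist_eq_norm]
    exact hlt
  have := hp _ hU hpU
  rw [hγU] at this
  exact lt_irrefl 0 this
end

section
/- Let c : X × Y → [0,∞] be continuous (with values in [0,∞] topologized so that c(x,y) → ∞ as (x,y) approaches a point where c is infinite), finite off the diagonal and equal to +∞ on the diagonal. Suppose S ⊂ X × Y is c-cyclically monotone and contains pairs (x₀,y₀) and (x̄₀,ȳ₀) with x₀ ≠ x̄₀ and y₀ ≠ ȳ₀. Then with F(x,y) := min{c(x,y₀)+R₁(y), c(x,ȳ₀)+R₂(y)}, R₁(y) := min{c(x₀,y)+c(x̄₀,ȳ₀), c(x₀,ȳ₀)+c(x̄₀,y)}, R₂(y) := min{c(x₀,y)+c(x̄₀,y₀), c(x₀,y₀)+c(x̄₀,y)}, the inequality c(x₀,y₀) + c(x̄₀,ȳ₀) + c(x,y) ≤ F(x,y) holds for all (x,y) ∈ S, and F is continuous on X × Y. -/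
open scoped ENNReal

variable {d : ℕ}

/-- `S` is `c`-cyclically monotone. -/
def CCyclicallyMonotone {α : Type*}
    (c : α × α → ℝ≥0∞) (S : Set (α × α)) : Prop :=
  ∀ (n : ℕ) (p : Fin n → α × α), (∀ i, p i ∈ S) → ∀ σ : Equiv.Perm (Fin n),
    ∑ i, c ((p i).1, (p i).2) ≤ ∑ i, c ((p i).1, (p (σ i)).2)

/-- Lemma: for a continuous cost `c : X × Y → [0,∞]`, finite off the diagonal and
`+∞` on it, and a `c`-cyclically monotone `S ⊂ X × Y` containing pairs
`(x₀,y₀)`, `(xb₀,yb₀)` with `x₀ ≠ xb₀`, `y₀ ≠ yb₀`, the function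
`F(x,y) = min{c(x,y₀)+R₁(y), c(x,yb₀)+R₂(y)}` is continuous on `X × Y` and
satisfies `c(x₀,y₀) + c(xb₀,yb₀) + c(x,y) ≤ F(x,y)` on `S`. -/
theorem stmt_8
    (X Y : Set (EuclideanSpace ℝ (Fin (d + 1))))
    (hX : IsClosed X) (hY : IsClosed Y)
    (c : EuclideanSpace ℝ (Fin (d + 1)) × EuclideanSpace ℝ (Fin (d + 1)) → ℝ≥0∞)
    (hc : Continuous c)
    (hfin : ∀ p : EuclideanSpace ℝ (Fin (d + 1)) × EuclideanSpace ℝ (Fin (d + 1)),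
      p.1 ≠ p.2 → c p ≠ ∞)
    (hdiag : ∀ x : EuclideanSpace ℝ (Fin (d + 1)), c (x, x) = ∞)
    (S : Set (EuclideanSpace ℝ (Fin (d + 1)) × EuclideanSpace ℝ (Fin (d + 1))))
    (hS : S ⊆ X ×ˢ Y) (hmono : CCyclicallyMonotone c S)
    (x₀ y₀ xb₀ yb₀ : EuclideanSpace ℝ (Fin (d + 1)))
    (h₀ : (x₀, y₀) ∈ S) (hb₀ : (xb₀, yb₀) ∈ S)
    (hx : x₀ ≠ xb₀) (hy : y₀ ≠ yb₀)
    (R₁ R₂ F : EuclideanSpace ℝ (Fin (d + 1)) × EuclideanSpace ℝ (Fin (d + 1)) → ℝ≥0∞)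
    (hR₁ : ∀ p, R₁ p = min (c (x₀, p.2) + c (xb₀, yb₀)) (c (x₀, yb₀) + c (xb₀, p.2)))
    (hR₂ : ∀ p, R₂ p = min (c (x₀, p.2) + c (xb₀, y₀)) (c (x₀, y₀) + c (xb₀, p.2)))
    (hF : ∀ p, F p = min (c (p.1, y₀) + R₁ p) (c (p.1, yb₀) + R₂ p)) :
    (∀ p ∈ S, c (x₀, y₀) + c (xb₀, yb₀) + c p ≤ F p) ∧
    ContinuousOn F (X ×ˢ Y) := by
  constructor
  · rintro ⟨x, y⟩ hp
    set q : Fin 3 → _ × _ := ![(x₀, y₀), (xb₀, yb₀), (x, y)] with hq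
    have hmem : ∀ i, q i ∈ S := by
      intro i; fin_cases i <;> simpa [hq] using ‹_›
    have key : ∀ σ : Equiv.Perm (Fin 3),
        c (x₀, y₀) + c (xb₀, yb₀) + c (x, y) ≤
          c (x₀, (q (σ 0)).2) + c (xb₀, (q (σ 1)).2) + c (x, (q (σ 2)).2) := by
      intro σ
      have := hmono 3 q hmem σ
      simpa [hq, Fin.sum_univ_three] using this
    have e1 : (Equiv.swap (0:Fin 3) 2) 1 = 1 := by decide
    have er0 : (finRotate 3)⁻¹ (0:Fin 3) = 2 := by decide
    have er1 : (finRotate 3)⁻¹ (1:Fin 3) = 0 := by decide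
    have er2 : (finRotate 3)⁻¹ (2:Fin 3) = 1 := by decide
    have es0 : (Equiv.swap (1:Fin 3) 2) 0 = 0 := by decide
    have hA := key (Equiv.swap 0 2)
    have hB := key (finRotate 3)
    have hC := key (finRotate 3)⁻¹
    have hD := key (Equiv.swap 1 2)
    simp only [hq, Equiv.swap_apply_left, Equiv.swap_apply_right, Matrix.cons_val_zero,
      Matrix.cons_val_one, Matrix.head_cons] at hA hB hC hD
    rw [hF, hR₁, hR₂, le_min_iff]
    constructor
    · rw [← min_add_add_left, le_min_iff]
      constructor
      · calc c (x₀, y₀) + c (xb₀, yb₀) + c (x, y)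
            ≤ c (x₀, (q ((Equiv.swap 0 2 : Equiv.Perm (Fin 3)) 0)).2)
              + c (xb₀, (q ((Equiv.swap 0 2 : Equiv.Perm (Fin 3)) 1)).2)
              + c (x, (q ((Equiv.swap 0 2 : Equiv.Perm (Fin 3)) 2)).2) := key _
          _ = c ((x, y).1, y₀) + (c (x₀, (x, y).2) + c (xb₀, yb₀)) := by
              simp [hq, e1, er0, er1, er2, es0]; ring
      · calc c (x₀, y₀) + c (xb₀, yb₀) + c (x, y)
            ≤ _ := key (finRotate 3)
          _ = c ((x, y).1, y₀) + (c (x₀, yb₀) + c (xb₀, (x, y).2)) := by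
              simp [hq, e1, er0, er1, er2, es0]; ring
    · rw [← min_add_add_left, le_min_iff]
      constructor
      · calc c (x₀, y₀) + c (xb₀, yb₀) + c (x, y)
            ≤ _ := key (finRotate 3)⁻¹
          _ = c ((x, y).1, yb₀) + (c (x₀, (x, y).2) + c (xb₀, y₀)) := by
              simp [hq, e1, er0, er1, er2, es0]; ring
      · calc c (x₀, y₀) + c (xb₀, yb₀) + c (x, y)
            ≤ _ := key (Equiv.swap 1 2)
          _ = c ((x, y).1, yb₀) + (c (x₀, y₀) + c (xb₀, (x, y).2)) := by
              simp [hq, e1, er0, er1, er2, es0]; ring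
  · have : F = fun p => min (c (p.1, y₀) + R₁ p) (c (p.1, yb₀) + R₂ p) := funext hF
    rw [this]
    have hsnd : ∀ z, Continuous fun p : EuclideanSpace ℝ (Fin (d + 1)) ×
        EuclideanSpace ℝ (Fin (d + 1)) => c (z, p.2) :=
      fun z => hc.comp (continuous_const.prodMk continuous_snd)
    have hfst : ∀ z, Continuous fun p : EuclideanSpace ℝ (Fin (d + 1)) ×
        EuclideanSpace ℝ (Fin (d + 1)) => c (p.1, z) :=
      fun z => hc.comp (continuous_fst.prodMk continuous_const)
    have hR₁' : Continuous R₁ := by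
      have : R₁ = fun p => min (c (x₀, p.2) + c (xb₀, yb₀)) (c (x₀, yb₀) + c (xb₀, p.2)) :=
        funext hR₁
      rw [this]
      exact Continuous.min ((hsnd x₀).add continuous_const)
        (continuous_const.add (hsnd xb₀))
    have hR₂' : Continuous R₂ := by
      have : R₂ = fun p => min (c (x₀, p.2) + c (xb₀, y₀)) (c (x₀, y₀) + c (xb₀, p.2)) :=
        funext hR₂
      rw [this]
      exact Continuous.min ((hsnd x₀).add continuous_const)
        (continuous_const.add (hsnd xb₀))
    exact (Continuous.min ((hfst y₀).add hR₁') ((hfst yb₀).add hR₂')).continuousOn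
end

section
/- Let X, Y be compact subsets of R^{d+1} and c : X × Y → [0,∞] continuous with c(x,x) = +∞ and c finite and C¹ off the diagonal. If S ⊂ X × Y is c-cyclically monotone and contains pairs (x₀,y₀), (x̄₀,ȳ₀) with x̄₀, ȳ₀ ∉ {x₀, y₀}, then there is δ > 0 such that |x - y| ≥ 2δ for every (x,y) ∈ S. -/
open scoped ENNReal

variable {d : ℕ}

/-- Let `X, Y ⊂ ℝ^{d+1}` be compact and `c : X × Y → [0,∞]` continuous with
`c(x,x) = +∞` and `c` finite and `C¹` off the diagonal.  If `S ⊂ X × Y` is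
`c`-cyclically monotone and contains pairs `(x₀,y₀)`, `(x̄₀,ȳ₀)` with
`x̄₀, ȳ₀ ∉ {x₀, y₀}`, then there is `δ > 0` with `|x - y| ≥ 2δ` on `S`. -/
theorem stmt_9
    (X Y : Set (EuclideanSpace ℝ (Fin (d + 1))))
    (hX : IsCompact X) (hY : IsCompact Y)
    (c : EuclideanSpace ℝ (Fin (d + 1)) × EuclideanSpace ℝ (Fin (d + 1)) → ℝ≥0∞)
    (hc : Continuous c)
    (hfin : ∀ p : EuclideanSpace ℝ (Fin (d + 1)) × EuclideanSpace ℝ (Fin (d + 1)),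
      p.1 ≠ p.2 → c p ≠ ∞)
    (hdiag : ∀ x : EuclideanSpace ℝ (Fin (d + 1)), c (x, x) = ∞)
    (hC1 : ContDiffOn ℝ 1 (fun p => (c p).toReal)
      {p : EuclideanSpace ℝ (Fin (d + 1)) × EuclideanSpace ℝ (Fin (d + 1)) |
        p.1 ≠ p.2})
    (S : Set (EuclideanSpace ℝ (Fin (d + 1)) × EuclideanSpace ℝ (Fin (d + 1))))
    (hS : S ⊆ X ×ˢ Y) (hmono : CCyclicallyMonotone c S)
    (x₀ y₀ xb₀ yb₀ : EuclideanSpace ℝ (Fin (d + 1)))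
    (h₀ : (x₀, y₀) ∈ S) (hb₀ : (xb₀, yb₀) ∈ S)
    (hxb : xb₀ ≠ x₀ ∧ xb₀ ≠ y₀) (hyb : yb₀ ≠ x₀ ∧ yb₀ ≠ y₀) :
    ∃ δ : ℝ, 0 < δ ∧ ∀ p ∈ S, 2 * δ ≤ ‖p.1 - p.2‖ := by

  by_contra hcon
  push_neg at hcon
  -- a sequence of pairs in S with distance going to 0
  choose p hpS hp using fun n : ℕ => hcon (1 / (2 * (n + 1))) (by positivity)
  have hdist : Filter.Tendsto (fun n => ‖(p n).1 - (p n).2‖) Filter.atTop (nhds 0) := by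
    have hb : Filter.Tendsto (fun n : ℕ => 1 / ((n : ℝ) + 1)) Filter.atTop (nhds 0) :=
      tendsto_one_div_add_atTop_nhds_zero_nat
    refine squeeze_zero (fun n => norm_nonneg _) (fun n => ?_) hb
    have := (hp n).le
    calc ‖(p n).1 - (p n).2‖ ≤ 2 * (1 / (2 * ((n : ℝ) + 1))) := this
      _ = 1 / ((n : ℝ) + 1) := by field_simp
  -- extract a convergent subsequence
  obtain ⟨a, haXY, φ, hφ, hlim⟩ := (hX.prod hY).tendsto_subseq (fun n => hS (hpS n))
  have hlim1 : Filter.Tendsto (fun n => (p (φ n)).1) Filter.atTop (nhds a.1) :=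
    (continuous_fst.tendsto a).comp hlim
  have hlim2 : Filter.Tendsto (fun n => (p (φ n)).2) Filter.atTop (nhds a.2) :=
    (continuous_snd.tendsto a).comp hlim
  have haeq : a.1 = a.2 := by
    have h1 : Filter.Tendsto (fun n => ‖(p (φ n)).1 - (p (φ n)).2‖) Filter.atTop
        (nhds ‖a.1 - a.2‖) := (hlim1.sub hlim2).norm
    have h2 : Filter.Tendsto (fun n => ‖(p (φ n)).1 - (p (φ n)).2‖) Filter.atTop
        (nhds 0) := hdist.comp hφ.tendsto_atTop
    have := tendsto_nhds_unique h1 h2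
    rwa [norm_sub_eq_zero_iff] at this
  set z := a.1 with hz
  -- choose a pair q in S avoiding z
  obtain ⟨q, hqS, hq1, hq2⟩ : ∃ q ∈ S, q.1 ≠ z ∧ q.2 ≠ z := by
    by_cases hcase : z = x₀ ∨ z = y₀
    · exact ⟨(xb₀, yb₀), hb₀, by rcases hcase with h | h <;> simp [h, hxb.1, hxb.2, hyb.1, hyb.2]⟩
    · push_neg at hcase
      exact ⟨(x₀, y₀), h₀, fun h => hcase.1 h.symm, fun h => hcase.2 h.symm⟩
  -- key inequality from 2-cyclical monotonicity
  have key : ∀ n, c (p n) ≤ c ((p n).1, q.2) + c (q.1, (p n).2) := by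
    intro n
    have := hmono 2 ![p n, q] (by intro i; fin_cases i <;> simp [hpS n, hqS]) (Equiv.swap 0 1)
    simp [Fin.sum_univ_two, Equiv.swap_apply_left, Equiv.swap_apply_right] at this
    calc c (p n) ≤ c (p n) + c q := le_self_add
      _ ≤ _ := this
  -- limits
  have hinf : Filter.Tendsto (fun n => c (p (φ n))) Filter.atTop (nhds ∞) := by
    have ha : a = (z, z) := Prod.ext rfl haeq.symm
    have := (hc.tendsto a).comp hlim
    rwa [ha, hdiag] at this
  have hL : Filter.Tendsto (fun n => c ((p (φ n)).1, q.2) + c (q.1, (p (φ n)).2))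
      Filter.atTop (nhds (c (z, q.2) + c (q.1, z))) := by
    have t1 : Filter.Tendsto (fun n => c ((p (φ n)).1, q.2)) Filter.atTop
        (nhds (c (z, q.2))) :=
      (hc.tendsto (z, q.2)).comp (hlim1.prodMk_nhds tendsto_const_nhds)
    have t2 : Filter.Tendsto (fun n => c (q.1, (p (φ n)).2)) Filter.atTop
        (nhds (c (q.1, z))) := by
      have : Filter.Tendsto (fun n => (p (φ n)).2) Filter.atTop (nhds z) := by
        rwa [← haeq] at hlim2
      exact (hc.tendsto (q.1, z)).comp (tendsto_const_nhds.prodMk_nhds this)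
    exact t1.add t2
  have hle : (∞ : ℝ≥0∞) ≤ c (z, q.2) + c (q.1, z) :=
    le_of_tendsto_of_tendsto' hinf hL (fun n => key (φ n))
  have hne : c (z, q.2) + c (q.1, z) ≠ ∞ :=
    ENNReal.add_ne_top.2 ⟨hfin _ (fun h => hq2 h.symm), hfin _ hq1⟩
  exact hne (top_le_iff.mp hle)
end
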